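/- arXiv:1910.10243 — 4 statements merged into one kernel-verified Lean document; each statement's English description precedes it below -/
import Mathlib

section
/- Let μ, (Q_n), b, and P_n be as in the definition of paraorthogonal polynomials on the unit circle, and suppose P_n(ζ) = 0 with ζ ≠ 0. Then for every polynomial h of degree at most n−1, ∫ P_n(e^{iθ})/(e^{iθ} − ζ) · conj(h(e^{iθ})) dμ(θ) = conj(h(ζ)) · ∫ P_n(e^{iθ})/(e^{iθ} − ζ) dμ(θ). -/
/-!
Write `P = (z - ζ) S` and `⟨f, g⟩ = ∫ f(e^{iθ}) conj(g(e^{iθ})) dμ(θ)`. Since `Q_{n-1}` is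
orthogonal to all polynomials of lower degree and `|e^{iθ}| = 1`, `P` is orthogonal to
`z, …, z^{n-1}`. Expanding `⟨(z - ζ) S, z^{j+1}⟩ = 0` gives `⟨S, z^{j+1}⟩ = ζ⁻¹ ⟨S, z^j⟩`, hence
`⟨S, g⟩ = conj(g(ζ*)) ⟨S, 1⟩` for `deg g ≤ n - 1`, where `ζ* = 1 / conj ζ`.
If `ζ* = ζ` this is the claim. Otherwise, since `|b| = 1`, `P` is self-reciprocal up to a
unimodular factor, so `ζ*` is a root of `P` and hence of `S`; then `⟨S, S⟩ = 0`, so `S` vanishes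
`μ`-a.e. on the circle and both sides of the claim are `0`.
-/

open Real Complex MeasureTheory Polynomial

open ComplexConjugate

noncomputable def circleInner (μ : Measure ℝ) (f g : ℂ[X]) : ℂ :=
  ∫ θ, f.eval (Complex.exp (θ * I)) * conj (g.eval (Complex.exp (θ * I))) ∂μ

lemma exp_ofReal_mul_I_mul_conj (θ : ℝ) :
    Complex.exp (θ * I) * conj (Complex.exp (θ * I)) = 1 := by
  rw [mul_conj, normSq_eq_norm_sq, norm_exp_ofReal_mul_I, one_pow, ofReal_one]

lemma integrable_comp_exp_ofReal_mul_I {E : Type*} [NormedAddCommGroup E] (μ : Measure ℝ)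
    [IsFiniteMeasure μ] {F : ℂ → E} (hF : Continuous F) :
    Integrable (fun θ : ℝ => F (Complex.exp (θ * I))) μ := by
  obtain ⟨C, hC⟩ := (isCompact_sphere (0 : ℂ) 1).exists_bound_of_continuousOn hF.continuousOn
  refine .of_bound (by fun_prop : Continuous _).aestronglyMeasurable C
    (ae_of_all _ fun θ => hC _ ?_)
  simp

lemma eval_reverse {K : Type*} [Field K] (p : K[X]) {z : K} (hz : z ≠ 0) :
    p.reverse.eval z = z ^ p.natDegree * p.eval z⁻¹ := by
  let _ : Invertible z⁻¹ := invertibleOfNonzero (inv_ne_zero hz)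
  have h := eval₂_reverse_mul_pow (RingHom.id K) z⁻¹ p
  rw [invOf_eq_inv, inv_inv, ← eval, ← eval] at h
  rw [← h, inv_pow, mul_left_comm, mul_inv_cancel₀ (pow_ne_zero _ hz), mul_one]

lemma eval_map_conj (p : ℂ[X]) (z : ℂ) : (p.map conj).eval z = conj (p.eval (conj z)) := by
  rw [eval_map, ← eval₂_at_apply, conj_conj]

namespace circleInner

variable {μ : Measure ℝ}

lemma C_mul_left (c : ℂ) (f g : ℂ[X]) :
    circleInner μ (C c * f) g = c * circleInner μ f g := by
  simp only [circleInner, eval_mul, eval_C, mul_assoc]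
  exact integral_const_mul c _

lemma one_right (f : ℂ[X]) :
    circleInner μ f 1 = ∫ θ, f.eval (Complex.exp (θ * I)) ∂μ := by
  simp [circleInner]

lemma X_mul_X_pow_succ (f : ℂ[X]) (j : ℕ) :
    circleInner μ (X * f) (X ^ (j + 1)) = circleInner μ f (X ^ j) := by
  unfold circleInner
  congr 1 with θ
  simp only [eval_mul, eval_pow, eval_X, pow_succ, map_mul, map_pow]
  linear_combination (f.eval (Complex.exp (θ * I)) * conj (Complex.exp (θ * I)) ^ j) *
    exp_ofReal_mul_I_mul_conj θ

lemma reverse_map_conj_X_pow (q : ℂ[X]) {j : ℕ} (hj : j ≤ q.natDegree) :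
    circleInner μ (q.map conj).reverse (X ^ j) =
      conj (circleInner μ q (X ^ (q.natDegree - j))) := by
  unfold circleInner
  rw [← integral_conj]
  congr 1 with θ
  have hz := exp_ofReal_mul_I_mul_conj θ
  obtain ⟨d, hd⟩ := Nat.exists_eq_add_of_le hj
  rw [eval_reverse _ (Complex.exp_ne_zero _), natDegree_map, eval_map_conj, map_inv₀,
    inv_eq_of_mul_eq_one_right (by rw [mul_comm]; exact hz)]
  simp only [eval_pow, eval_X, map_mul, map_pow, conj_conj, hd, Nat.add_sub_cancel_left, pow_add]
  rw [mul_right_comm, mul_right_comm (_ ^ j), ← mul_pow, hz, one_pow, one_mul]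
  ring

variable [IsFiniteMeasure μ]

lemma integrable_integrand (f g : ℂ[X]) :
    Integrable
      (fun θ : ℝ => f.eval (Complex.exp (θ * I)) * conj (g.eval (Complex.exp (θ * I)))) μ :=
  integrable_comp_exp_ofReal_mul_I μ (F := fun z => f.eval z * conj (g.eval z)) (by fun_prop)

lemma sub_left (f g k : ℂ[X]) :
    circleInner μ (f - g) k = circleInner μ f k - circleInner μ g k := by
  simp only [circleInner, eval_sub, sub_mul]
  exact integral_sub (integrable_integrand f k) (integrable_integrand g k)

lemma sub_right (f g k : ℂ[X]) :
    circleInner μ f (g - k) = circleInner μ f g - circleInner μ f k := by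
  simp only [circleInner, eval_sub, map_sub, mul_sub]
  exact integral_sub (integrable_integrand f g) (integrable_integrand f k)

lemma eq_sum_coeff (f g : ℂ[X]) {N : ℕ} (hg : g.degree < N) :
    circleInner μ f g = ∑ j ∈ Finset.range N, conj (g.coeff j) * circleInner μ f (X ^ j) := by
  have hg' : g.natDegree < N ∨ g = 0 := by
    rcases eq_or_ne g 0 with h | h
    · exact .inr h
    · exact .inl ((natDegree_lt_iff_degree_lt h).2 hg)
  rcases hg' with hg' | rfl
  · unfold circleInner
    simp_rw [← integral_const_mul]
    rw [← integral_finsetSum _ fun j _ => (integrable_integrand f (X ^ j)).const_mul _]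
    congr 1 with θ
    rw [eval_eq_sum_range' hg', map_sum, Finset.mul_sum]
    refine Finset.sum_congr rfl fun j _ => ?_
    simp only [map_mul, eval_pow, eval_X]
    ring
  · simp [circleInner]

lemma eq_zero_of_self_eq_zero {f : ℂ[X]} (hf : circleInner μ f f = 0) (g : ℂ[X]) :
    circleInner μ f g = 0 := by
  have hnorm : ∫ θ, ‖f.eval (Complex.exp (θ * I))‖ ^ 2 ∂μ = 0 := by
    apply Complex.ofReal_injective
    rw [ofReal_zero, ← hf, circleInner, ← integral_complex_ofReal]
    congr 1 with θ
    rw [mul_conj, normSq_eq_norm_sq, ofReal_pow]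
  have hae : (fun θ : ℝ => f.eval (Complex.exp (θ * I))) =ᵐ[μ] 0 := by
    have hint : Integrable (fun θ : ℝ => ‖f.eval (Complex.exp (θ * I))‖ ^ 2) μ :=
      integrable_comp_exp_ofReal_mul_I μ (F := fun z => ‖f.eval z‖ ^ 2) (by fun_prop)
    filter_upwards [(integral_eq_zero_iff_of_nonneg (fun _ => sq_nonneg _) hint).1 hnorm]
      with θ hθ
    simpa using hθ
  rw [circleInner, integral_eq_zero_of_ae]
  filter_upwards [hae] with θ hθ
  simp [hθ]

end circleInner

-- `(q.map conj).reverse` is the reversed polynomial `q*(z) = z ^ deg q * conj (q (1 / conj z))`.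
noncomputable def paraorthogonalPoly (q : ℂ[X]) (b : ℂ) : ℂ[X] :=
  X * q - C (conj b) * (q.map conj).reverse

lemma natDegree_paraorthogonalPoly {q : ℂ[X]} (hq : q ≠ 0) (b : ℂ) :
    (paraorthogonalPoly q b).natDegree = q.natDegree + 1 := by
  have hXq : (X * q).natDegree = q.natDegree + 1 := by
    rw [natDegree_mul X_ne_zero hq, natDegree_X, add_comm]
  have hlt : (C (conj b) * (q.map conj).reverse).natDegree < (X * q).natDegree := calc
    (C (conj b) * (q.map conj).reverse).natDegree ≤ (q.map conj).reverse.natDegree :=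
        natDegree_C_mul_le _ _
    _ ≤ (q.map conj).natDegree := reverse_natDegree_le _
    _ < (X * q).natDegree := by rw [hXq, natDegree_map]; omega
  rw [paraorthogonalPoly, natDegree_sub_eq_left_of_natDegree_lt hlt, hXq]

lemma paraorthogonalPoly_eval_inv_conj (q : ℂ[X]) {b : ℂ} (hb : ‖b‖ = 1) {z : ℂ}
    (hz : z ≠ 0) :
    (paraorthogonalPoly q b).eval (conj z)⁻¹ =
      -conj b * ((conj z)⁻¹) ^ (q.natDegree + 1) * conj ((paraorthogonalPoly q b).eval z) := by
  have hbb : b * conj b = 1 := by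
    rw [mul_conj, normSq_eq_norm_sq, hb, one_pow, ofReal_one]
  have hz' : conj z ≠ 0 := (_root_.map_ne_zero _).2 hz
  simp only [paraorthogonalPoly, eval_sub, eval_mul, eval_X, eval_C,
    eval_reverse _ hz, eval_reverse _ (inv_ne_zero hz'), natDegree_map, eval_map_conj,
    map_inv₀, conj_conj, inv_inv, map_sub, map_mul, map_pow]
  have hw : (conj z)⁻¹ * conj z = 1 := inv_mul_cancel₀ hz'
  have hwm : (conj z)⁻¹ ^ q.natDegree * conj z ^ q.natDegree = 1 := by
    rw [← mul_pow, hw, one_pow]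
  linear_combination (conj b * (conj z)⁻¹ ^ q.natDegree * conj (q.eval z)) * hw
    - ((conj z)⁻¹ * q.eval (conj z)⁻¹ * conj b * b) * hwm
    - ((conj z)⁻¹ * q.eval (conj z)⁻¹) * hbb

section

variable {μ : Measure ℝ} [IsFiniteMeasure μ]

lemma circleInner_eq_zero_of_degree_lt {Q : ℕ → ℂ[X]} (hmonic : ∀ k, (Q k).Monic)
    (hdeg : ∀ k, (Q k).natDegree = k) (horth : ∀ k m, k ≠ m → circleInner μ (Q k) (Q m) = 0)
    {m : ℕ} {g : ℂ[X]} (hg : g.degree < m) : circleInner μ (Q m) g = 0 := by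
  have hX : ∀ j < m, circleInner μ (Q m) (X ^ j) = 0 := by
    intro j
    induction j using Nat.strong_induction_on with
    | _ j ih =>
      intro hj
      have hlow : (Q j - X ^ j).degree < (j : WithBot ℕ) := by
        have hQj : (Q j).degree = j := by
          rw [degree_eq_natDegree (hmonic j).ne_zero, hdeg]
        simpa [hQj] using degree_sub_lt_left (q := X ^ j) (by rw [hQj, degree_X_pow])
          (hmonic j).ne_zero (by rw [(hmonic j).leadingCoeff, leadingCoeff_X_pow])
      rw [← sub_sub_cancel (Q j) (X ^ j), circleInner.sub_right, horth m j (by omega),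
        circleInner.eq_sum_coeff _ _ hlow, zero_sub, neg_eq_zero]
      exact Finset.sum_eq_zero fun i hi => by
        rw [ih i (Finset.mem_range.1 hi) ((Finset.mem_range.1 hi).trans hj), mul_zero]
  rw [circleInner.eq_sum_coeff _ _ hg]
  exact Finset.sum_eq_zero fun j hj => by rw [hX j (Finset.mem_range.1 hj), mul_zero]

lemma circleInner_paraorthogonalPoly_X_pow {q : ℂ[X]}
    (hq : ∀ g : ℂ[X], g.degree < q.natDegree → circleInner μ q g = 0) (b : ℂ) {j : ℕ}
    (hj₁ : 1 ≤ j) (hj : j ≤ q.natDegree) :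
    circleInner μ (paraorthogonalPoly q b) (X ^ j) = 0 := by
  obtain ⟨i, rfl⟩ := Nat.exists_eq_add_of_le' hj₁
  rw [paraorthogonalPoly, circleInner.sub_left, circleInner.C_mul_left,
    circleInner.X_mul_X_pow_succ, circleInner.reverse_map_conj_X_pow _ hj, hq, hq, map_zero,
    mul_zero, sub_zero] <;>
  · rw [degree_X_pow]
    exact_mod_cast (by omega)

lemma circleInner_eq_conj_eval_mul_of_orthogonal {S : ℂ[X]} {ζ : ℂ} (hζ : ζ ≠ 0) {m : ℕ}
    (horth : ∀ j, 1 ≤ j → j ≤ m → circleInner μ ((X - C ζ) * S) (X ^ j) = 0)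
    {g : ℂ[X]} (hg : g.natDegree ≤ m) :
    circleInner μ S g = conj (g.eval (conj ζ)⁻¹) * circleInner μ S 1 := by
  have hmom : ∀ j ≤ m, circleInner μ S (X ^ j) = ζ⁻¹ ^ j * circleInner μ S 1 := by
    intro j
    induction j with
    | zero => simp
    | succ j ih =>
      intro hj
      have h := horth (j + 1) (by omega) hj
      rw [sub_mul, circleInner.sub_left, circleInner.C_mul_left, circleInner.X_mul_X_pow_succ,
        ih (by omega), sub_eq_zero] at h
      rw [pow_succ' ζ⁻¹, mul_assoc, h, inv_mul_cancel_left₀ hζ]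
  rw [circleInner.eq_sum_coeff _ _ ((degree_le_of_natDegree_le hg).trans_lt
      (by exact_mod_cast Nat.lt_succ_self m)),
    eval_eq_sum_range' (Nat.lt_succ_of_le hg), map_sum, Finset.sum_mul]
  refine Finset.sum_congr rfl fun j hj => ?_
  rw [hmom j (Nat.lt_succ_iff.1 (Finset.mem_range.1 hj))]
  simp only [map_mul, map_pow, map_inv₀, conj_conj]
  ring

end

theorem stmt_11_general (μ : Measure ℝ) [IsFiniteMeasure μ]
    (Q : ℕ → Polynomial ℂ)
    (hmonic : ∀ k, (Q k).Monic) (hdeg : ∀ k, (Q k).natDegree = k)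
    (horth : ∀ k m, k ≠ m →
      ∫ θ, (Q k).eval (Complex.exp (θ * Complex.I)) *
        (starRingEnd ℂ) ((Q m).eval (Complex.exp (θ * Complex.I))) ∂μ = 0)
    (n : ℕ) (b : ℂ) (hb : ‖b‖ = 1)
    (P : Polynomial ℂ)
    (hP : P = Polynomial.X * Q (n - 1) -
      Polynomial.C ((starRingEnd ℂ) b) * ((Q (n - 1)).map (starRingEnd ℂ)).reverse)
    (ζ : ℂ) (hζ0 : ζ ≠ 0) (hPζ : P.eval ζ = 0)
    (h : Polynomial ℂ) (hh : h.natDegree ≤ n - 1) :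
    ∫ θ, (P /ₘ (Polynomial.X - Polynomial.C ζ)).eval (Complex.exp (θ * Complex.I)) *
        (starRingEnd ℂ) (h.eval (Complex.exp (θ * Complex.I))) ∂μ =
      (starRingEnd ℂ) (h.eval ζ) *
        ∫ θ, (P /ₘ (Polynomial.X - Polynomial.C ζ)).eval (Complex.exp (θ * Complex.I)) ∂μ := by
  change P = paraorthogonalPoly (Q (n - 1)) b at hP
  set S := P /ₘ (X - C ζ)
  have hfactor : (X - C ζ) * S = P := mul_divByMonic_eq_iff_isRoot.2 hPζ
  have hSdeg : S.natDegree ≤ n - 1 := by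
    rw [natDegree_divByMonic _ (monic_X_sub_C ζ), hP, natDegree_paraorthogonalPoly
      (hmonic _).ne_zero, natDegree_X_sub_C, hdeg]
    omega
  have hmoment : ∀ g : ℂ[X], g.natDegree ≤ n - 1 →
      circleInner μ S g = conj (g.eval (conj ζ)⁻¹) * circleInner μ S 1 := by
    refine fun g hg => circleInner_eq_conj_eval_mul_of_orthogonal hζ0 (fun j hj₁ hj => ?_) hg
    rw [hfactor, hP]
    exact circleInner_paraorthogonalPoly_X_pow
      (fun g hg => circleInner_eq_zero_of_degree_lt hmonic hdeg horth (by rwa [hdeg] at hg))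
      b hj₁ (by rwa [hdeg])
  change circleInner μ S h = conj (h.eval ζ) * _
  rw [← circleInner.one_right]
  by_cases hζ' : (conj ζ)⁻¹ = ζ
  · rw [hmoment h hh, hζ']
  · have hPζ' : P.eval (conj ζ)⁻¹ = 0 := by
      rw [hP, paraorthogonalPoly_eval_inv_conj _ hb hζ0, ← hP, hPζ, map_zero, mul_zero]
    have hSζ' : S.eval (conj ζ)⁻¹ = 0 := by
      rw [← hfactor, eval_mul] at hPζ'
      simpa [sub_ne_zero.2 hζ'] using hPζ'
    have hSS : circleInner μ S S = 0 := by rw [hmoment S hSdeg, hSζ', map_zero, zero_mul]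
    rw [circleInner.eq_zero_of_self_eq_zero hSS, circleInner.eq_zero_of_self_eq_zero hSS,
      mul_zero]

theorem stmt_11 (μ : Measure ℝ) [IsFiniteMeasure μ]
    (hsupp : μ (Set.Ico 0 (2 * π))ᶜ = 0)
    (hinf : ∀ s : Finset ℝ, μ ((↑s : Set ℝ))ᶜ ≠ 0)
    (Q : ℕ → Polynomial ℂ)
    (hmonic : ∀ k, (Q k).Monic) (hdeg : ∀ k, (Q k).natDegree = k)
    (horth : ∀ k m, k ≠ m →
      ∫ θ, (Q k).eval (Complex.exp (θ * Complex.I)) *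
        (starRingEnd ℂ) ((Q m).eval (Complex.exp (θ * Complex.I))) ∂μ = 0)
    (hnorm : ∀ k, ∫ θ, ‖(Q k).eval (Complex.exp (θ * Complex.I))‖ ^ 2 ∂μ ≠ 0)
    (n : ℕ) (hn : 1 ≤ n) (b : ℂ) (hb : ‖b‖ = 1)
    (P : Polynomial ℂ)
    (hP : P = Polynomial.X * Q (n - 1) -
      Polynomial.C ((starRingEnd ℂ) b) * ((Q (n - 1)).map (starRingEnd ℂ)).reverse)
    (ζ : ℂ) (hζ0 : ζ ≠ 0) (hPζ : P.eval ζ = 0)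
    (h : Polynomial ℂ) (hh : h.natDegree ≤ n - 1) :
    ∫ θ, (P /ₘ (Polynomial.X - Polynomial.C ζ)).eval (Complex.exp (θ * Complex.I)) *
        (starRingEnd ℂ) (h.eval (Complex.exp (θ * Complex.I))) ∂μ =
      (starRingEnd ℂ) (h.eval ζ) *
        ∫ θ, (P /ₘ (Polynomial.X - Polynomial.C ζ)).eval (Complex.exp (θ * Complex.I)) ∂μ :=
  stmt_11_general μ Q hmonic hdeg horth n b hb P hP ζ hζ0 hPζ h hh
end

section
/- Let μ, b, P_n be as in the definition of POPUC, and suppose ζ is a zero of P_n with ζ on the unit circle. If P_n(z) = C·(z − ζ)·K_{n−1}(ζ, z) where K_{n−1}(w, z) = Σ_{j=0}^{n−1} conj(q_j(w))·q_j(z) is the Christoffel–Darboux kernel of the normalized OPUC q_j, then C = ∫ P_n(e^{iθ})/(e^{iθ} − ζ) dμ(θ), and this integral is nonzero. -/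
open Real Complex MeasureTheory Polynomial ComplexConjugate

/-! The factorisation says `P /ₘ (X - ζ) = c • K_{n-1}(ζ, ·)`. Integrating the kernel against `μ`
gives `1`: this is the reproducing property tested on the constant `q₀`. Hence the integral is `c`,
and `c ≠ 0` because `P` has leading coefficient `1` in degree `n`, so it is not the zero polynomial. -/

lemma integrable_comp_exp_mul_I {μ : Measure ℝ} [IsFiniteMeasure μ] {f : ℂ → ℂ}
    (hf : Continuous f) : Integrable (fun θ : ℝ => f (exp (θ * I))) μ := by
  obtain ⟨M, hM⟩ := (isCompact_sphere (0 : ℂ) 1).exists_bound_of_continuousOn hf.continuousOn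
  refine .of_bound (by fun_prop : Continuous _).aestronglyMeasurable M (.of_forall fun θ => ?_)
  exact hM _ (by simp [norm_exp_ofReal_mul_I])

lemma divByMonic_X_sub_C_eq_of_eval {R : Type*} [CommRing R] [IsDomain R] [Infinite R]
    {p g : R[X]} {a : R} (h : ∀ z, p.eval z = (z - a) * g.eval z) :
    p /ₘ (X - C a) = g := by
  have hp : p = (X - C a) * g := Polynomial.funext fun z => by simp [h]
  rw [hp, mul_divByMonic_cancel_left _ (monic_X_sub_C a)]

lemma coeff_X_mul_sub_of_natDegree_le {R : Type*} [CommRing R] {Q S : R[X]} {m : ℕ}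
    (hQ : Q.Monic) (hQm : Q.natDegree = m) (hS : S.natDegree ≤ m) :
    (X * Q - S).coeff (m + 1) = 1 := by
  rw [coeff_sub, coeff_X_mul, coeff_eq_zero_of_natDegree_lt (p := S) (by omega), ← hQm]
  simpa using hQ.leadingCoeff

/-- The polynomial `z ↦ K_{n-1}(w, z)`. -/
noncomputable def cdKernel (q : ℕ → ℂ[X]) (n : ℕ) (w : ℂ) : ℂ[X] :=
  ∑ j ∈ Finset.range n, C (conj ((q j).eval w)) * q j

lemma eval_cdKernel (q : ℕ → ℂ[X]) (n : ℕ) (w z : ℂ) :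
    (cdKernel q n w).eval z = ∑ j ∈ Finset.range n, conj ((q j).eval w) * (q j).eval z := by
  simp [cdKernel, eval_finsetSum]

section Orthonormal

variable {μ : Measure ℝ} {q : ℕ → ℂ[X]}
  (horthon : ∀ k m, ∫ θ, (q k).eval (exp (θ * I)) * conj ((q m).eval (exp (θ * I))) ∂μ =
    if k = m then 1 else 0)
include horthon

lemma integral_cdKernel_mul_conj [IsFiniteMeasure μ] (n : ℕ) (w : ℂ) {k : ℕ} (hk : k < n) :
    ∫ θ, (cdKernel q n w).eval (exp (θ * I)) * conj ((q k).eval (exp (θ * I))) ∂μ =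
      conj ((q k).eval w) := by
  simp only [eval_cdKernel, Finset.sum_mul, mul_assoc]
  rw [integral_finsetSum _ fun j _ => (integrable_comp_exp_mul_I
    (f := fun z => (q j).eval z * conj ((q k).eval z)) (by fun_prop)).const_mul _]
  simp only [integral_const_mul, horthon, mul_ite, mul_one, mul_zero]
  simp [Finset.mem_range.mpr hk]

lemma integral_cdKernel [IsFiniteMeasure μ] (hq0 : (q 0).natDegree = 0) {n : ℕ} (hn : 1 ≤ n)
    (w : ℂ) : ∫ θ, (cdKernel q n w).eval (exp (θ * I)) ∂μ = 1 := by
  obtain ⟨a, ha⟩ : ∃ a, C a = q 0 := natDegree_eq_zero.mp hq0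
  have ha0 : a ≠ 0 := by
    rintro rfl
    simpa [← ha] using horthon 0 0
  have h := integral_cdKernel_mul_conj horthon n w hn
  simp only [← ha, eval_C, integral_mul_const] at h
  exact mul_right_cancel₀ (by simpa using ha0) (h.trans (one_mul _).symm)

end Orthonormal

theorem stmt_12_general (μ : Measure ℝ) [IsFiniteMeasure μ]
    (Q : ℕ → Polynomial ℂ)
    (hmonic : ∀ k, (Q k).Monic) (hdeg : ∀ k, (Q k).natDegree = k)
    (q : ℕ → Polynomial ℂ) (hqdeg : ∀ k, (q k).natDegree = k)
    (horthon : ∀ k m,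
      ∫ θ, (q k).eval (Complex.exp (θ * Complex.I)) *
        (starRingEnd ℂ) ((q m).eval (Complex.exp (θ * Complex.I))) ∂μ =
        if k = m then 1 else 0)
    (n : ℕ) (hn : 1 ≤ n) (b : ℂ)
    (P : Polynomial ℂ)
    (hP : P = Polynomial.X * Q (n - 1) -
      Polynomial.C ((starRingEnd ℂ) b) * ((Q (n - 1)).map (starRingEnd ℂ)).reverse)
    (ζ : ℂ)
    (c : ℂ)
    (hc : ∀ z : ℂ, P.eval z = c * (z - ζ) *
      ∑ j ∈ Finset.range n, (starRingEnd ℂ) ((q j).eval ζ) * (q j).eval z) :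
    c = (∫ θ, (P /ₘ (Polynomial.X - Polynomial.C ζ)).eval (Complex.exp (θ * Complex.I)) ∂μ) ∧
    (∫ θ, (P /ₘ (Polynomial.X - Polynomial.C ζ)).eval (Complex.exp (θ * Complex.I)) ∂μ) ≠ 0 := by
  have hdiv : P /ₘ (X - C ζ) = C c * cdKernel q n ζ :=
    divByMonic_X_sub_C_eq_of_eval fun z => by rw [hc, eval_mul, eval_C, eval_cdKernel]; ring
  have hintegral : ∫ θ, (P /ₘ (X - C ζ)).eval (exp (θ * I)) ∂μ = c := by
    simp only [hdiv, eval_mul, eval_C, integral_const_mul,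
      integral_cdKernel horthon (hqdeg 0) hn, mul_one]
  have hP0 : P ≠ 0 := by
    have hcoeff : P.coeff (n - 1 + 1) = 1 := by
      rw [hP]
      refine coeff_X_mul_sub_of_natDegree_le (hmonic _) (hdeg _) ?_
      calc _ ≤ ((Q (n - 1)).map (starRingEnd ℂ)).reverse.natDegree := natDegree_C_mul_le _ _
        _ ≤ (Q (n - 1)).natDegree := reverse_natDegree_le _ |>.trans natDegree_map_le
        _ = n - 1 := hdeg _
    exact fun h => by simp [h] at hcoeff
  have hc0 : c ≠ 0 := by
    rintro rfl
    exact hP0 (Polynomial.funext fun z => by simp [hc])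
  exact ⟨hintegral.symm, hintegral ▸ hc0⟩

theorem stmt_12 (μ : Measure ℝ) [IsFiniteMeasure μ]
    (hsupp : μ (Set.Ico 0 (2 * π))ᶜ = 0)
    (hinf : ∀ s : Finset ℝ, μ ((↑s : Set ℝ))ᶜ ≠ 0)
    (Q : ℕ → Polynomial ℂ)
    (hmonic : ∀ k, (Q k).Monic) (hdeg : ∀ k, (Q k).natDegree = k)
    (horth : ∀ k m, k ≠ m →
      ∫ θ, (Q k).eval (Complex.exp (θ * Complex.I)) *
        (starRingEnd ℂ) ((Q m).eval (Complex.exp (θ * Complex.I))) ∂μ = 0)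
    (q : ℕ → Polynomial ℂ) (hqdeg : ∀ k, (q k).natDegree = k)
    (horthon : ∀ k m,
      ∫ θ, (q k).eval (Complex.exp (θ * Complex.I)) *
        (starRingEnd ℂ) ((q m).eval (Complex.exp (θ * Complex.I))) ∂μ =
        if k = m then 1 else 0)
    (n : ℕ) (hn : 1 ≤ n) (b : ℂ) (hb : ‖b‖ = 1)
    (P : Polynomial ℂ)
    (hP : P = Polynomial.X * Q (n - 1) -
      Polynomial.C ((starRingEnd ℂ) b) * ((Q (n - 1)).map (starRingEnd ℂ)).reverse)
    (ζ : ℂ) (hζ : ‖ζ‖ = 1) (hPζ : P.eval ζ = 0)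
    (c : ℂ)
    (hc : ∀ z : ℂ, P.eval z = c * (z - ζ) *
      ∑ j ∈ Finset.range n, (starRingEnd ℂ) ((q j).eval ζ) * (q j).eval z) :
    c = (∫ θ, (P /ₘ (Polynomial.X - Polynomial.C ζ)).eval (Complex.exp (θ * Complex.I)) ∂μ) ∧
    (∫ θ, (P /ₘ (Polynomial.X - Polynomial.C ζ)).eval (Complex.exp (θ * Complex.I)) ∂μ) ≠ 0 :=
  stmt_12_general μ Q hmonic hdeg q hqdeg horthon n hn b P hP ζ c hc
end

section
/- Let μ, P_n be as in the definition of POPUC with P_n(ζ) = 0, ζ on the unit circle, and let R(z) = P_n(z) − P_n'(ζ)·(z − ζ). Then ∫ |P_n(e^{iθ})/(e^{iθ} − ζ)|² dμ(θ) = conj(P_n'(ζ)) · ∫ P_n(e^{iθ})/(e^{iθ} − ζ) dμ(θ). -/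
open Real Complex MeasureTheory Polynomial
noncomputable section XAux

namespace XAux

abbrev e (θ : ℝ) : ℂ := Complex.exp (θ * Complex.I)

lemma e_mul_conj (θ : ℝ) : e θ * (starRingEnd ℂ) (e θ) = 1 := by
  rw [Complex.mul_conj, Complex.normSq_eq_norm_sq]
  norm_cast
  simp [Complex.norm_exp_ofReal_mul_I]

lemma cont_eval (p : ℂ[X]) : Continuous (fun θ : ℝ => p.eval (e θ)) :=
  p.continuous.comp (Complex.continuous_exp.comp (Complex.continuous_ofReal.mul continuous_const))

lemma norm_eval_le (p : ℂ[X]) (θ : ℝ) :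
    ‖p.eval (e θ)‖ ≤ ∑ k ∈ Finset.range (p.natDegree + 1), ‖p.coeff k‖ := by
  rw [Polynomial.eval_eq_sum_range]
  refine (norm_sum_le _ _).trans (Finset.sum_le_sum fun k _ => ?_)
  have : ‖e θ‖ = 1 := by simpa using Complex.norm_exp_ofReal_mul_I θ
  rw [norm_mul, norm_pow, this, one_pow, mul_one]

lemma integ2 (μ : Measure ℝ) [IsFiniteMeasure μ] (p q : ℂ[X]) :
    Integrable (fun θ => p.eval (e θ) * (starRingEnd ℂ) (q.eval (e θ))) μ := by
  refine (integrable_const ((∑ k ∈ Finset.range (p.natDegree + 1), ‖p.coeff k‖) *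
      (∑ k ∈ Finset.range (q.natDegree + 1), ‖q.coeff k‖))).mono'
    ?_ (Filter.Eventually.of_forall fun θ => ?_)
  · exact ((cont_eval p).mul (continuous_star.comp (cont_eval q))).aestronglyMeasurable
  · rw [norm_mul, RCLike.norm_conj]
    have h1 := norm_eval_le p θ
    have h2 := norm_eval_le q θ
    have h1' : (0:ℝ) ≤ ‖p.eval (e θ)‖ := norm_nonneg _
    have h2' : (0:ℝ) ≤ ‖q.eval (e θ)‖ := norm_nonneg _
    nlinarith

lemma integ1 (μ : Measure ℝ) [IsFiniteMeasure μ] (p : ℂ[X]) :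
    Integrable (fun θ => p.eval (e θ)) μ := by
  have := integ2 μ p 1
  simpa using this

lemma expand (μ : Measure ℝ) [IsFiniteMeasure μ] (p q : ℂ[X]) (d : ℕ) (hd : q.natDegree < d) :
    ∫ θ, p.eval (e θ) * (starRingEnd ℂ) (q.eval (e θ)) ∂μ
      = ∑ k ∈ Finset.range d, (starRingEnd ℂ) (q.coeff k) *
          ∫ θ, p.eval (e θ) * (starRingEnd ℂ) ((e θ) ^ k) ∂μ := by
  have hpt : ∀ θ : ℝ, p.eval (e θ) * (starRingEnd ℂ) (q.eval (e θ))
      = ∑ k ∈ Finset.range d, (starRingEnd ℂ) (q.coeff k) *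
          (p.eval (e θ) * (starRingEnd ℂ) ((e θ) ^ k)) := by
    intro θ
    rw [Polynomial.eval_eq_sum_range' hd, map_sum, Finset.mul_sum]
    exact Finset.sum_congr rfl fun k _ => by rw [map_mul]; ring
  simp_rw [hpt]
  rw [integral_finset_sum]
  · exact Finset.sum_congr rfl fun k _ => integral_const_mul _ _
  · intro k _
    have := (integ2 μ p (X ^ k)).const_mul ((starRingEnd ℂ) (q.coeff k))
    simpa using this

lemma rev_eval (p : ℂ[X]) (z : ℂ) (hz : z * (starRingEnd ℂ) z = 1) :
    ((p.map (starRingEnd ℂ)).reverse).eval z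
      = z ^ p.natDegree * (starRingEnd ℂ) (p.eval z) := by
  have hz0 : z ≠ 0 := by
    intro h; rw [h] at hz; simp at hz
  have hinvz : z⁻¹ = (starRingEnd ℂ) z := by
    field_simp at hz ⊢
    rw [← hz]
  have hmapdeg : (p.map (starRingEnd ℂ)).natDegree = p.natDegree :=
    natDegree_map_eq_of_injective (RingHom.injective _) p
  have hrev : (p.map (starRingEnd ℂ)).reverse = (p.reverse).map (starRingEnd ℂ) := by
    rw [Polynomial.reverse, Polynomial.reverse, hmapdeg, Polynomial.reflect_map]
  have : Invertible (z⁻¹ : ℂ) := ⟨z, by field_simp, by field_simp⟩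
  have hinv : (⅟(z⁻¹ : ℂ)) = z :=
    invOf_eq_right_inv (by field_simp)
  have key := Polynomial.eval₂_reverse_mul_pow (starRingEnd ℂ) (z⁻¹ : ℂ) p
  rw [hinv] at key
  -- key : eval₂ conj z (reverse p) * (z⁻¹) ^ p.natDegree = eval₂ conj z⁻¹ p
  have h1 : ((p.map (starRingEnd ℂ)).reverse).eval z = eval₂ (starRingEnd ℂ) z p.reverse := by
    rw [hrev, Polynomial.eval_map]
  have h2 : eval₂ (starRingEnd ℂ) (z⁻¹) p = (starRingEnd ℂ) (p.eval z) := by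
    rw [hinvz]
    exact Polynomial.eval₂_at_apply _ _
  rw [h1]
  have hzn : (z⁻¹ : ℂ) ^ p.natDegree ≠ 0 := pow_ne_zero _ (inv_ne_zero hz0)
  rw [← h2, ← key]
  rw [← mul_assoc, mul_comm (z ^ _), mul_assoc, ← mul_pow, mul_inv_cancel₀ hz0, one_pow, mul_one]


lemma lemB (μ : Measure ℝ) [IsFiniteMeasure μ] (Q : ℕ → Polynomial ℂ)
    (hmonic : ∀ k, (Q k).Monic) (hdeg : ∀ k, (Q k).natDegree = k)
    (horth : ∀ k m, k ≠ m →
      ∫ θ, (Q k).eval (e θ) * (starRingEnd ℂ) ((Q m).eval (e θ)) ∂μ = 0) :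
    ∀ j m, j < m → ∫ θ, (Q m).eval (e θ) * (starRingEnd ℂ) ((e θ) ^ j) ∂μ = 0 := by
  intro j
  induction j using Nat.strong_induction_on with
  | _ j ih =>
    intro m hjm
    have h0 := horth m j (by omega)
    rw [expand μ (Q m) (Q j) (j + 1) (by rw [hdeg]; omega)] at h0
    rw [Finset.sum_range_succ] at h0
    have hz : ∀ k ∈ Finset.range j, (starRingEnd ℂ) ((Q j).coeff k) *
        ∫ θ, (Q m).eval (e θ) * (starRingEnd ℂ) ((e θ) ^ k) ∂μ = 0 := by
      intro k hk
      have hkj := Finset.mem_range.mp hk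
      rw [ih k hkj m (by omega), mul_zero]
    rw [Finset.sum_eq_zero hz, zero_add] at h0
    have hlc : (Q j).coeff j = 1 := by
      have := (hmonic j).coeff_natDegree
      rwa [hdeg j] at this
    rw [hlc, map_one, one_mul] at h0
    exact h0


lemma lemA (μ : Measure ℝ) [IsFiniteMeasure μ] (Q : ℕ → Polynomial ℂ)
    (hmonic : ∀ k, (Q k).Monic) (hdeg : ∀ k, (Q k).natDegree = k)
    (horth : ∀ k m, k ≠ m →
      ∫ θ, (Q k).eval (e θ) * (starRingEnd ℂ) ((Q m).eval (e θ)) ∂μ = 0)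
    (n : ℕ) (hn : 1 ≤ n) (b : ℂ) (P : Polynomial ℂ)
    (hP : P = Polynomial.X * Q (n - 1) -
      Polynomial.C ((starRingEnd ℂ) b) * ((Q (n - 1)).map (starRingEnd ℂ)).reverse)
    (j : ℕ) (hj : j < n - 1) :
    ∫ θ, P.eval (e θ) * (starRingEnd ℂ) ((e θ) ^ (j + 1)) ∂μ = 0 := by
  set m := n - 1 with hm
  have hpt : ∀ θ : ℝ, P.eval (e θ) * (starRingEnd ℂ) ((e θ) ^ (j + 1))
      = (Q m).eval (e θ) * (starRingEnd ℂ) ((e θ) ^ j)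
        - (starRingEnd ℂ) b * ((e θ) ^ (m - (j + 1)) *
            (starRingEnd ℂ) ((Q m).eval (e θ))) := by
    intro θ
    set z := e θ with hzdef
    have hz : z * (starRingEnd ℂ) z = 1 := e_mul_conj θ
    have hrev : (((Q m).map (starRingEnd ℂ)).reverse).eval z
        = z ^ m * (starRingEnd ℂ) ((Q m).eval z) := by
      rw [rev_eval (Q m) z hz, hdeg]
    rw [hP]
    simp only [eval_sub, eval_mul, eval_C, eval_X, hrev, map_pow]
    have h1 : z * ((starRingEnd ℂ) z) ^ (j + 1) = ((starRingEnd ℂ) z) ^ j := by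
      rw [pow_succ]
      linear_combination ((starRingEnd ℂ) z) ^ j * hz
    have h2 : z ^ m * ((starRingEnd ℂ) z) ^ (j + 1) = z ^ (m - (j + 1)) := by
      have hsplit : z ^ m = z ^ (m - (j + 1)) * z ^ (j + 1) := by
        rw [← pow_add]
        congr 1
        omega
      rw [hsplit, mul_assoc, ← mul_pow, hz, one_pow, mul_one]
    linear_combination (Q m).eval z * h1
      - (starRingEnd ℂ) b * (starRingEnd ℂ) ((Q m).eval z) * h2
  simp_rw [hpt]
  rw [integral_sub, integral_const_mul]
  · rw [lemB μ Q hmonic hdeg horth j m hj]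
    have hpt2 : ∀ θ : ℝ, (e θ) ^ (m - (j + 1)) * (starRingEnd ℂ) ((Q m).eval (e θ))
        = (starRingEnd ℂ) ((Q m).eval (e θ) * (starRingEnd ℂ) ((e θ) ^ (m - (j + 1)))) := by
      intro θ
      simp only [map_mul, Complex.conj_conj]
      ring
    simp_rw [hpt2]
    rw [integral_conj, lemB μ Q hmonic hdeg horth (m - (j + 1)) m (by omega)]
    simp
  · have := integ2 μ (Q m) (X ^ j)
    simpa using this
  · have := ((integ2 μ (X ^ (m - (j + 1))) (Q m)).const_mul ((starRingEnd ℂ) b))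
    simpa [mul_assoc] using this

end XAux

end XAux

open XAux in
theorem stmt_14 (μ : Measure ℝ) [IsFiniteMeasure μ]
    (hsupp : μ (Set.Ico 0 (2 * π))ᶜ = 0)
    (hinf : ∀ s : Finset ℝ, μ ((↑s : Set ℝ))ᶜ ≠ 0)
    (Q : ℕ → Polynomial ℂ)
    (hmonic : ∀ k, (Q k).Monic) (hdeg : ∀ k, (Q k).natDegree = k)
    (horth : ∀ k m, k ≠ m →
      ∫ θ, (Q k).eval (Complex.exp (θ * Complex.I)) *
        (starRingEnd ℂ) ((Q m).eval (Complex.exp (θ * Complex.I))) ∂μ = 0)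
    (hnorm : ∀ k, ∫ θ, ‖(Q k).eval (Complex.exp (θ * Complex.I))‖ ^ 2 ∂μ ≠ 0)
    (n : ℕ) (hn : 1 ≤ n) (b : ℂ) (hb : ‖b‖ = 1)
    (P : Polynomial ℂ)
    (hP : P = Polynomial.X * Q (n - 1) -
      Polynomial.C ((starRingEnd ℂ) b) * ((Q (n - 1)).map (starRingEnd ℂ)).reverse)
    (ζ : ℂ) (hζ : ‖ζ‖ = 1) (hPζ : P.eval ζ = 0) :
    ∫ θ, (P /ₘ (Polynomial.X - Polynomial.C ζ)).eval (Complex.exp (θ * Complex.I)) *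
        (starRingEnd ℂ)
          ((P /ₘ (Polynomial.X - Polynomial.C ζ)).eval (Complex.exp (θ * Complex.I))) ∂μ =
      (starRingEnd ℂ) ((Polynomial.derivative P).eval ζ) *
        ∫ θ, (P /ₘ (Polynomial.X - Polynomial.C ζ)).eval (Complex.exp (θ * Complex.I)) ∂μ := by
  set S : Polynomial ℂ := P /ₘ (Polynomial.X - Polynomial.C ζ) with hSdef
  have hPS : (Polynomial.X - Polynomial.C ζ) * S = P :=
    (mul_divByMonic_eq_iff_isRoot).2 hPζ
  set c : ℂ := (Polynomial.derivative P).eval ζ with hcdef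
  have hc : S.eval ζ = c := by
    rw [hcdef, ← hPS, derivative_mul]
    simp
  set T : Polynomial ℂ := (S - Polynomial.C c) /ₘ (Polynomial.X - Polynomial.C ζ) with hTdef
  have hST : (Polynomial.X - Polynomial.C ζ) * T = S - Polynomial.C c :=
    (mul_divByMonic_eq_iff_isRoot).2 (by simp [Polynomial.IsRoot, hc])
  have hPdeg : P.natDegree ≤ n := by
    rw [hP]
    refine (natDegree_sub_le _ _).trans (max_le ?_ ?_)
    · exact natDegree_mul_le.trans (by rw [natDegree_X, hdeg]; omega)
    · refine natDegree_mul_le.trans ?_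
      rw [natDegree_C, zero_add]
      refine (reverse_natDegree_le _).trans ?_
      rw [natDegree_map_eq_of_injective (RingHom.injective _), hdeg]
      omega
  have hSdeg : S.natDegree ≤ n - 1 := by
    rw [hSdef, natDegree_divByMonic P (monic_X_sub_C ζ), natDegree_X_sub_C]
    omega
  have hSCdeg : (S - Polynomial.C c).natDegree ≤ n - 1 := by
    refine (natDegree_sub_le _ _).trans (max_le hSdeg ?_)
    simp
  have hTdeg : T.natDegree < n := by
    rw [hTdef, natDegree_divByMonic _ (monic_X_sub_C ζ), natDegree_X_sub_C]
    omega
  have hT0 : ∀ j, n - 1 ≤ j → T.coeff j = 0 := by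
    intro j hj
    by_cases hT : T = 0
    · simp [hT]
    · apply coeff_eq_zero_of_natDegree_lt
      have hmul := natDegree_mul (X_sub_C_ne_zero ζ) hT
      rw [hST, natDegree_X_sub_C] at hmul
      omega
  have hkey : ∀ θ : ℝ, S.eval (e θ) * (starRingEnd ℂ) (S.eval (e θ))
      = (starRingEnd ℂ) c * S.eval (e θ)
        + (-((starRingEnd ℂ) ζ)) * ∑ k ∈ Finset.range n, (starRingEnd ℂ) (T.coeff k) *
            (P.eval (e θ) * (starRingEnd ℂ) ((e θ) ^ (k + 1))) := by
    intro θ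
    set z := e θ with hzdef
    have hz : z * (starRingEnd ℂ) z = 1 := e_mul_conj θ
    have hzeta : ζ * (starRingEnd ℂ) ζ = 1 := by
      rw [Complex.mul_conj, Complex.normSq_eq_norm_sq]
      norm_cast
      rw [hζ]
      norm_num
    have hPz : P.eval z = (z - ζ) * S.eval z := by
      rw [← hPS]
      simp
    have hSz : S.eval z - c = (z - ζ) * T.eval z := by
      have h := congrArg (Polynomial.eval z) hST
      simpa using h.symm
    have hTz : T.eval z = ∑ k ∈ Finset.range n, T.coeff k * z ^ k :=
      Polynomial.eval_eq_sum_range' hTdeg z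
    have hsum : ∑ k ∈ Finset.range n, (starRingEnd ℂ) (T.coeff k) *
          (P.eval z * (starRingEnd ℂ) (z ^ (k + 1)))
        = P.eval z * ((starRingEnd ℂ) z * (starRingEnd ℂ) (T.eval z)) := by
      rw [hTz, map_sum, Finset.mul_sum, Finset.mul_sum]
      refine Finset.sum_congr rfl fun k _ => ?_
      simp only [map_mul, map_pow]
      ring
    rw [hsum]
    have hconjS : (starRingEnd ℂ) (S.eval z) = (starRingEnd ℂ) c
        + ((starRingEnd ℂ) z - (starRingEnd ℂ) ζ) * (starRingEnd ℂ) (T.eval z) := by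
      have h := congrArg (starRingEnd ℂ) hSz
      simp only [map_sub, map_mul] at h
      linear_combination h
    rw [hPz, hconjS]
    linear_combination (S.eval z * (starRingEnd ℂ) (T.eval z) * (starRingEnd ℂ) ζ) * hz
      - (S.eval z * (starRingEnd ℂ) (T.eval z) * (starRingEnd ℂ) z) * hzeta
  simp_rw [hkey]
  have hintS : Integrable (fun θ => ((starRingEnd ℂ) c) * S.eval (e θ)) μ :=
    (integ1 μ S).const_mul _
  have hintterm : ∀ k, Integrable (fun θ => (starRingEnd ℂ) (T.coeff k) *
      (P.eval (e θ) * (starRingEnd ℂ) ((e θ) ^ (k + 1)))) μ := by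
    intro k
    have := (integ2 μ P (Polynomial.X ^ (k + 1))).const_mul ((starRingEnd ℂ) (T.coeff k))
    simpa using this
  have hintsum : Integrable (fun θ => (-((starRingEnd ℂ) ζ)) *
      ∑ k ∈ Finset.range n, (starRingEnd ℂ) (T.coeff k) *
        (P.eval (e θ) * (starRingEnd ℂ) ((e θ) ^ (k + 1)))) μ :=
    (integrable_finset_sum _ fun k _ => hintterm k).const_mul _
  rw [integral_add hintS hintsum, integral_const_mul, integral_const_mul,
    integral_finset_sum _ fun k _ => hintterm k]
  have hzero : ∀ k ∈ Finset.range n,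
      ∫ θ, (starRingEnd ℂ) (T.coeff k) *
        (P.eval (e θ) * (starRingEnd ℂ) ((e θ) ^ (k + 1))) ∂μ = 0 := by
    intro k hk
    rw [integral_const_mul]
    by_cases hkn : k < n - 1
    · rw [lemA μ Q hmonic hdeg horth n hn b P hP k hkn, mul_zero]
    · rw [hT0 k (by omega), map_zero, zero_mul]
  rw [Finset.sum_congr rfl hzero]
  simp
end

section
/- Let G(t) be a differentiable family of n×n unitary matrices of the form G(t) = H·diag(1, …, 1, conj(b(t))) where H is a fixed unitary matrix and b(t) lies on the unit circle and is differentiable. Suppose ζ(t) = e^{iφ(t)} is a simple eigenvalue of G(t) with differentiable normalized eigenvector p(t). Then φ'(t) = i·conj(b(t))·b'(t)·|p_n(t)|², where p_n(t) is the last component of p(t). In particular, if i·conj(b(t))·b'(t) > 0 and p_n(t) ≠ 0, then φ'(t) > 0. -/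
open scoped ComplexOrder

theorem stmt_17 (n : ℕ) (hn : 0 < n) (H : Matrix (Fin n) (Fin n) ℂ)
    (hHU : H.conjTranspose * H = 1)
    (b : ℝ → ℂ) (hb : Differentiable ℝ b) (hbu : ∀ t, ‖b t‖ = 1)
    (G : ℝ → Matrix (Fin n) (Fin n) ℂ)
    (hG : ∀ t, G t = H * Matrix.diagonal (fun i : Fin n =>
      if i = (⟨n - 1, Nat.sub_lt hn Nat.one_pos⟩ : Fin n) then (starRingEnd ℂ) (b t) else 1))
    (φ : ℝ → ℝ) (hφ : Differentiable ℝ φ)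
    (p : ℝ → Fin n → ℂ) (hp : ∀ i, Differentiable ℝ fun t => p t i)
    (hpnorm : ∀ t, ∑ i, ‖p t i‖ ^ 2 = 1)
    (heig : ∀ t, (G t).mulVec (p t) = Complex.exp (φ t * Complex.I) • p t)
    (hsimple : ∀ t,
      (Matrix.charpoly (G t)).rootMultiplicity (Complex.exp (φ t * Complex.I)) = 1)
    (t : ℝ) :
    ((deriv φ t : ℝ) : ℂ) = Complex.I * (starRingEnd ℂ) (b t) * deriv b t *
      ((‖p t ⟨n - 1, Nat.sub_lt hn Nat.one_pos⟩‖ ^ 2 : ℝ) : ℂ) ∧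
    (0 < Complex.I * (starRingEnd ℂ) (b t) * deriv b t →
      p t ⟨n - 1, Nat.sub_lt hn Nat.one_pos⟩ ≠ 0 → 0 < deriv φ t) := by
  classical
  set m : Fin n := ⟨n - 1, Nat.sub_lt hn Nat.one_pos⟩ with hmdef
  set ζ : ℝ → ℂ := fun s => Complex.exp (φ s * Complex.I) with hζdef
  set d : ℝ → Fin n → ℂ := fun s j => if j = m then (starRingEnd ℂ) (b s) else 1 with hddef
  -- basic unimodularity facts
  have hcz : ∀ z : ℂ, (starRingEnd ℂ) z * z = ((‖z‖ ^ 2 : ℝ) : ℂ) := by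
    intro z
    rw [← Complex.normSq_eq_conj_mul_self, ← Complex.sq_norm]
  have hb1 : ∀ s, (starRingEnd ℂ) (b s) * b s = 1 := by
    intro s; rw [hcz, hbu s]; norm_num
  have hd1 : ∀ s j, (starRingEnd ℂ) (d s j) * d s j = 1 := by
    intro s j
    by_cases h : j = m
    · simp only [hddef, if_pos h, RingHom.id_apply, RingHomCompTriple.comp_apply,
        Complex.conj_conj]
      rw [mul_comm]; exact hb1 s
    · simp [hddef, if_neg h]
  have hζ1 : ∀ s, (starRingEnd ℂ) (ζ s) * ζ s = 1 := by
    intro s; rw [hcz]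
    rw [hζdef]
    simp only [Complex.norm_exp_ofReal_mul_I]
    norm_num
  have hζ0 : ∀ s, ζ s ≠ 0 := fun s => Complex.exp_ne_zero _
  -- entries of G
  have hGe : ∀ s i j, G s i j = H i j * d s j := by
    intro s i j
    rw [hG s]
    exact Matrix.mul_diagonal _ _ _ _
  -- eigen relation componentwise
  have heig' : ∀ s i, ∑ j, H i j * (d s j * p s j) = ζ s * p s i := by
    intro s i
    have h := congrFun (heig s) i
    simp only [Matrix.mulVec, dotProduct, Pi.smul_apply, smul_eq_mul] at h
    rw [← h]
    refine Finset.sum_congr rfl fun j _ => ?_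
    rw [hGe s i j, mul_assoc]
  -- unitarity of G s
  have hGG : ∀ s, (G s).conjTranspose * G s = 1 := by
    intro s
    rw [hG s, Matrix.conjTranspose_mul, Matrix.diagonal_conjTranspose, Matrix.mul_assoc,
      ← Matrix.mul_assoc H.conjTranspose H, hHU, Matrix.one_mul,
      Matrix.diagonal_mul_diagonal]
    have hone : (fun i : Fin n => star (fun j => d s j) i *
        if i = m then (starRingEnd ℂ) (b s) else 1) = fun _ : Fin n => (1 : ℂ) := by
      funext j
      exact hd1 s j
    rw [hone, Matrix.diagonal_one]
  -- adjoint eigen relation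
  have hadj : ∀ s, (G s).conjTranspose.mulVec (p s) = (starRingEnd ℂ) (ζ s) • p s := by
    intro s
    have h1 : (G s).conjTranspose.mulVec ((G s).mulVec (p s)) = p s := by
      rw [Matrix.mulVec_mulVec, hGG s, Matrix.one_mulVec]
    rw [heig s, Matrix.mulVec_smul] at h1
    have h2 : (starRingEnd ℂ) (ζ s) • (ζ s • (G s).conjTranspose.mulVec (p s))
        = (starRingEnd ℂ) (ζ s) • p s := by rw [h1]
    rw [smul_smul, hζ1 s, one_smul] at h2
    exact h2
  -- key row-sum fact
  have hB : ∀ j, ∑ i, (starRingEnd ℂ) (p t i) * H i j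
      = ζ t * ((starRingEnd ℂ) (d t j) * (starRingEnd ℂ) (p t j)) := by
    intro j
    have h := congrFun (hadj t) j
    simp only [Matrix.mulVec, dotProduct, Matrix.conjTranspose_apply, Pi.smul_apply,
      smul_eq_mul, Complex.star_def] at h
    have h2 : ∑ i, (starRingEnd ℂ) (H i j) * p t i
        = d t j * ((starRingEnd ℂ) (ζ t) * p t j) := by
      have h3 : (starRingEnd ℂ) (d t j) * ∑ i, (starRingEnd ℂ) (H i j) * p t i
          = (starRingEnd ℂ) (ζ t) * p t j := by
        rw [Finset.mul_sum, ← h]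
        refine Finset.sum_congr rfl fun i _ => ?_
        rw [hGe t i j, map_mul]; ring
      have h4 := congrArg (fun z => d t j * z) h3
      rw [← mul_assoc, mul_comm (d t j), hd1 t j, one_mul] at h4
      exact h4
    have h5 := congrArg (starRingEnd ℂ) h2
    simp only [map_sum, map_mul, Complex.conj_conj] at h5
    calc ∑ i, (starRingEnd ℂ) (p t i) * H i j
        = ∑ i, H i j * (starRingEnd ℂ) (p t i) := by
          refine Finset.sum_congr rfl fun i _ => mul_comm _ _
      _ = (starRingEnd ℂ) (d t j) * (ζ t * (starRingEnd ℂ) (p t j)) := h5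
      _ = ζ t * ((starRingEnd ℂ) (d t j) * (starRingEnd ℂ) (p t j)) := by ring
  -- norm fact
  have hN : ∀ s, ∑ i, (starRingEnd ℂ) (p s i) * p s i = 1 := by
    intro s
    have : ∑ i, (starRingEnd ℂ) (p s i) * p s i = ((∑ i, ‖p s i‖ ^ 2 : ℝ) : ℂ) := by
      rw [Complex.ofReal_sum]
      exact Finset.sum_congr rfl fun i _ => hcz _
    rw [this, hpnorm s]; norm_num
  -- the trace-like function F equals ζ
  set F : ℝ → ℂ := fun s => ∑ i, ∑ j, (starRingEnd ℂ) (p s i) * H i j * (d s j * p s j)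
    with hFdef
  have hF : ∀ s, F s = ζ s := by
    intro s
    rw [hFdef]
    simp only
    calc ∑ i, ∑ j, (starRingEnd ℂ) (p s i) * H i j * (d s j * p s j)
        = ∑ i, (starRingEnd ℂ) (p s i) * ∑ j, H i j * (d s j * p s j) := by
          refine Finset.sum_congr rfl fun i _ => ?_
          rw [Finset.mul_sum]
          refine Finset.sum_congr rfl fun j _ => by ring
      _ = ∑ i, (starRingEnd ℂ) (p s i) * (ζ s * p s i) := by
          refine Finset.sum_congr rfl fun i _ => by rw [heig' s i]
      _ = ζ s * ∑ i, (starRingEnd ℂ) (p s i) * p s i := by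
          rw [Finset.mul_sum]
          refine Finset.sum_congr rfl fun i _ => by ring
      _ = ζ s := by rw [hN s, mul_one]
  -- derivatives
  set P' : Fin n → ℂ := fun i => deriv (fun s => p s i) t with hP'def
  set b' : ℂ := deriv b t with hb'def
  set D' : Fin n → ℂ := fun j => if j = m then (starRingEnd ℂ) b' else 0 with hD'def
  have hP : ∀ i, HasDerivAt (fun s => p s i) (P' i) t := fun i =>
    ((hp i) t).hasDerivAt
  have hPc : ∀ i, HasDerivAt (fun s => (starRingEnd ℂ) (p s i)) ((starRingEnd ℂ) (P' i)) t :=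
    fun i => (hP i).star
  have hbd : HasDerivAt b b' t := (hb t).hasDerivAt
  have hbc : HasDerivAt (fun s => (starRingEnd ℂ) (b s)) ((starRingEnd ℂ) b') t := hbd.star
  have hD : ∀ j, HasDerivAt (fun s => d s j) (D' j) t := by
    intro j
    by_cases h : j = m
    · simp only [hddef, hD'def, if_pos h]
      exact hbc
    · simp only [hddef, hD'def, if_neg h]
      exact hasDerivAt_const t 1
  have hζd : HasDerivAt ζ (ζ t * ((deriv φ t : ℝ) * Complex.I)) t := by
    have h1 : HasDerivAt (fun s => ((φ s : ℝ) : ℂ)) ((deriv φ t : ℝ) : ℂ) t :=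
      ((hφ t).hasDerivAt).ofReal_comp
    have h2 := h1.mul_const Complex.I
    exact h2.cexp
  have hFd : HasDerivAt F (∑ i, ∑ j,
      ((starRingEnd ℂ) (P' i) * H i j * (d t j * p t j)
        + (starRingEnd ℂ) (p t i) * H i j * (D' j * p t j + d t j * P' j))) t := by
    rw [hFdef]
    refine HasDerivAt.fun_sum fun i _ => HasDerivAt.fun_sum fun j _ => ?_
    exact ((hPc i).mul_const (H i j)).mul ((hD j).mul (hP j))
  -- deriv of F equals deriv of ζ
  have hFζ : (∑ i, ∑ j,
      ((starRingEnd ℂ) (P' i) * H i j * (d t j * p t j)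
        + (starRingEnd ℂ) (p t i) * H i j * (D' j * p t j + d t j * P' j)))
      = ζ t * ((deriv φ t : ℝ) * Complex.I) := by
    have hfe : F = ζ := funext hF
    rw [hfe] at hFd
    exact hFd.unique hζd
  -- split the sum
  have hsplit : (∑ i, ∑ j,
      ((starRingEnd ℂ) (P' i) * H i j * (d t j * p t j)
        + (starRingEnd ℂ) (p t i) * H i j * (D' j * p t j + d t j * P' j)))
      = (∑ i, ∑ j, (starRingEnd ℂ) (P' i) * H i j * (d t j * p t j))
        + (∑ i, ∑ j, (starRingEnd ℂ) (p t i) * H i j * (D' j * p t j))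
        + (∑ i, ∑ j, (starRingEnd ℂ) (p t i) * H i j * (d t j * P' j)) := by
    rw [← Finset.sum_add_distrib, ← Finset.sum_add_distrib]
    refine Finset.sum_congr rfl fun i _ => ?_
    rw [← Finset.sum_add_distrib, ← Finset.sum_add_distrib]
    refine Finset.sum_congr rfl fun j _ => by ring
  -- S1
  have hS1 : (∑ i, ∑ j, (starRingEnd ℂ) (P' i) * H i j * (d t j * p t j))
      = ζ t * ∑ i, (starRingEnd ℂ) (P' i) * p t i := by
    rw [Finset.mul_sum]
    refine Finset.sum_congr rfl fun i _ => ?_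
    calc ∑ j, (starRingEnd ℂ) (P' i) * H i j * (d t j * p t j)
        = (starRingEnd ℂ) (P' i) * ∑ j, H i j * (d t j * p t j) := by
          rw [Finset.mul_sum]; exact Finset.sum_congr rfl fun j _ => by ring
      _ = (starRingEnd ℂ) (P' i) * (ζ t * p t i) := by rw [heig' t i]
      _ = ζ t * ((starRingEnd ℂ) (P' i) * p t i) := by ring
  -- S3
  have hS3 : (∑ i, ∑ j, (starRingEnd ℂ) (p t i) * H i j * (d t j * P' j))
      = ζ t * ∑ j, (starRingEnd ℂ) (p t j) * P' j := by
    rw [Finset.sum_comm, Finset.mul_sum]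
    refine Finset.sum_congr rfl fun j _ => ?_
    calc ∑ i, (starRingEnd ℂ) (p t i) * H i j * (d t j * P' j)
        = (∑ i, (starRingEnd ℂ) (p t i) * H i j) * (d t j * P' j) := by
          rw [Finset.sum_mul]
      _ = ζ t * ((starRingEnd ℂ) (d t j) * (starRingEnd ℂ) (p t j)) * (d t j * P' j) := by
          rw [hB j]
      _ = ((starRingEnd ℂ) (d t j) * d t j) * (ζ t * ((starRingEnd ℂ) (p t j) * P' j)) := by
          ring
      _ = ζ t * ((starRingEnd ℂ) (p t j) * P' j) := by rw [hd1 t j, one_mul]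
  -- S2
  have hS2 : (∑ i, ∑ j, (starRingEnd ℂ) (p t i) * H i j * (D' j * p t j))
      = ζ t * (b t * (starRingEnd ℂ) (p t m)) * ((starRingEnd ℂ) b' * p t m) := by
    have hinner : ∀ i, ∑ j, (starRingEnd ℂ) (p t i) * H i j * (D' j * p t j)
        = (starRingEnd ℂ) (p t i) * H i m * ((starRingEnd ℂ) b' * p t m) := by
      intro i
      rw [Finset.sum_eq_single m]
      · simp [hD'def]
      · intro j _ hj
        simp [hD'def, if_neg hj]
      · simp
    calc (∑ i, ∑ j, (starRingEnd ℂ) (p t i) * H i j * (D' j * p t j))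
        = ∑ i, (starRingEnd ℂ) (p t i) * H i m * ((starRingEnd ℂ) b' * p t m) := by
          exact Finset.sum_congr rfl fun i _ => hinner i
      _ = (∑ i, (starRingEnd ℂ) (p t i) * H i m) * ((starRingEnd ℂ) b' * p t m) := by
          rw [Finset.sum_mul]
      _ = ζ t * ((starRingEnd ℂ) (d t m) * (starRingEnd ℂ) (p t m))
            * ((starRingEnd ℂ) b' * p t m) := by rw [hB m]
      _ = ζ t * (b t * (starRingEnd ℂ) (p t m)) * ((starRingEnd ℂ) b' * p t m) := by
          have : (starRingEnd ℂ) (d t m) = b t := by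
            simp [hddef]
          rw [this]
  -- normalization derivative is zero
  have hNzero : (∑ i, ((starRingEnd ℂ) (P' i) * p t i + (starRingEnd ℂ) (p t i) * P' i)) = 0 := by
    have h1 : HasDerivAt (fun s => ∑ i, (starRingEnd ℂ) (p s i) * p s i)
        (∑ i, ((starRingEnd ℂ) (P' i) * p t i + (starRingEnd ℂ) (p t i) * P' i)) t :=
      HasDerivAt.fun_sum fun i _ => (hPc i).mul (hP i)
    have h2 : (fun s => ∑ i, (starRingEnd ℂ) (p s i) * p s i) = fun _ => (1 : ℂ) :=
      funext fun s => hN s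
    rw [h2] at h1
    exact h1.unique (hasDerivAt_const t 1)
  -- conclude the scalar equation
  have hmain : ((deriv φ t : ℝ) : ℂ) * Complex.I
      = b t * (starRingEnd ℂ) b' * ((starRingEnd ℂ) (p t m) * p t m) := by
    have key : ζ t * ((deriv φ t : ℝ) * Complex.I)
        = ζ t * (b t * (starRingEnd ℂ) b' * ((starRingEnd ℂ) (p t m) * p t m)) := by
      rw [← hFζ, hsplit, hS1, hS2, hS3]
      have : ζ t * (∑ i, (starRingEnd ℂ) (P' i) * p t i)
          + ζ t * (∑ j, (starRingEnd ℂ) (p t j) * P' j) = 0 := by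
        rw [← mul_add, ← Finset.sum_add_distrib, hNzero, mul_zero]
      linear_combination this
    exact mul_left_cancel₀ (hζ0 t) key
  -- conj b' * b = - conj b * b'
  have hbb : b t * (starRingEnd ℂ) b' = -((starRingEnd ℂ) (b t) * b') := by
    have h1 : HasDerivAt (fun s => (starRingEnd ℂ) (b s) * b s)
        ((starRingEnd ℂ) b' * b t + (starRingEnd ℂ) (b t) * b') t := hbc.mul hbd
    have h2 : (fun s => (starRingEnd ℂ) (b s) * b s) = fun _ => (1 : ℂ) :=
      funext fun s => hb1 s
    rw [h2] at h1
    have h3 := h1.unique (hasDerivAt_const t 1)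
    linear_combination h3
  have hpm : ((starRingEnd ℂ) (p t m) * p t m) = ((‖p t m‖ ^ 2 : ℝ) : ℂ) := hcz _
  have hpart1 : ((deriv φ t : ℝ) : ℂ) = Complex.I * (starRingEnd ℂ) (b t) * deriv b t *
      ((‖p t m‖ ^ 2 : ℝ) : ℂ) := by
    have heq : ((deriv φ t : ℝ) : ℂ) * Complex.I
        = -((starRingEnd ℂ) (b t) * b') * ((‖p t m‖ ^ 2 : ℝ) : ℂ) := by
      rw [hmain, hbb, hpm]
    have hI : Complex.I * -Complex.I = 1 := by
      rw [mul_neg, Complex.I_mul_I]; norm_num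
    calc ((deriv φ t : ℝ) : ℂ) = ((deriv φ t : ℝ) : ℂ) * (Complex.I * -Complex.I) := by
          rw [hI, mul_one]
      _ = (((deriv φ t : ℝ) : ℂ) * Complex.I) * -Complex.I := by ring
      _ = (-((starRingEnd ℂ) (b t) * b') * ((‖p t m‖ ^ 2 : ℝ) : ℂ)) * -Complex.I := by
          rw [heq]
      _ = Complex.I * (starRingEnd ℂ) (b t) * b' * ((‖p t m‖ ^ 2 : ℝ) : ℂ) := by ring
  refine ⟨hpart1, ?_⟩
  intro hpos hne
  have hr : (0 : ℝ) < ‖p t m‖ ^ 2 := pow_pos (norm_pos_iff.mpr hne) 2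
  have him : (Complex.I * (starRingEnd ℂ) (b t) * deriv b t).im = 0 ∧
      0 < (Complex.I * (starRingEnd ℂ) (b t) * deriv b t).re := by
    rw [Complex.lt_def] at hpos
    exact ⟨hpos.2.symm, by simpa using hpos.1⟩
  have hre := congrArg Complex.re hpart1
  simp only [Complex.ofReal_re, Complex.mul_re, Complex.ofReal_im, mul_zero, sub_zero,
    him.1, zero_mul] at hre
  rw [hre]
  exact mul_pos him.2 hr
end
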